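/- arXiv:2510.01377 — 2 statements merged into one kernel-verified Lean document; each statement's English description precedes it below -/
import Mathlib

section
/- Let α ∈ (1, 2] and let U, V ∈ ℝ^{m×n} with U ≠ 0. Then ‖U + V‖_F^α ≤ ‖U‖_F^α + α‖U‖_F^{α−2}⟨U, V⟩ + 2‖V‖_F^α. -/
open Matrix Kronecker

/-- Spectral norm: ℓ²→ℓ² operator norm of a real matrix. -/
noncomputable def specNorm {ι κ : Type*} [Fintype ι] [Fintype κ] [DecidableEq κ]
    (A : Matrix ι κ ℝ) : ℝ :=
  ‖LinearMap.toContinuousLinearMap (Matrix.toEuclideanLin A)‖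

/-- Nuclear norm: trace of the positive semidefinite square root of `Aᵀ * A`. -/
noncomputable def nucNorm {ι κ : Type*} [Fintype ι] [Fintype κ] [DecidableEq κ]
    (A : Matrix ι κ ℝ) : ℝ :=
  Matrix.trace ((Matrix.posSemidef_conjTranspose_mul_self A).1.eigenvectorUnitary.1 *
    diagonal ((↑) ∘ (√·) ∘ (Matrix.posSemidef_conjTranspose_mul_self A).1.eigenvalues) *
    (star (Matrix.posSemidef_conjTranspose_mul_self A).1.eigenvectorUnitary : Matrix κ κ ℝ))

/-- Frobenius norm. -/
noncomputable def frobNorm {ι κ : Type*} [Fintype ι] [Fintype κ] (A : Matrix ι κ ℝ) : ℝ :=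
  Real.sqrt (∑ i, ∑ j, (A i j) ^ 2)

/-- Trace inner product `⟨A, B⟩ = trace (Aᵀ B)`. -/
noncomputable def tin {ι κ : Type*} [Fintype ι] [Fintype κ] (A B : Matrix ι κ ℝ) : ℝ :=
  Matrix.trace (Aᵀ * B)

/-- Vertical stacking of `N` matrices of size `m × n`. -/
def vstack {N m n : ℕ} (Y : Fin N → Matrix (Fin m) (Fin n) ℝ) :
    Matrix (Fin N × Fin m) (Fin n) ℝ :=
  fun p j => Y p.1 p.2 j

/-!
Only the Euclidean structure of the Frobenius norm matters, so the inequality is proved in any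
real inner product space. With `a = ‖u‖`, `b = ‖v‖`, `t = ⟪u, v⟫` and `c = ‖u + v‖` one has
`c² = a² + 2t + b²` and `t ≥ -ab`. As `x ↦ x ^ (α / 2)` is concave, `c ^ α = (c²) ^ (α / 2)`
lies below its tangent line at `y²` for every `y > 0`. If `b ≤ 2a`, take `y = a`: the excess
`(α / 2) a ^ (α - 2) b²` is at most `2 b ^ α`. If `b > 2a`, take `y = b - a ≤ c`: then
`(b - a) ^ (α - 2) ≤ a ^ (α - 2)`, and Young's inequality `α a ^ (α - 1) b ≤ (α - 1) a ^ α + b ^ α`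
absorbs the remaining cross term.
-/

namespace Real

lemma rpow_le_rpow_add_mul_sub {p x y : ℝ} (hp₀ : 0 ≤ p) (hp₁ : p ≤ 1) (hx : 0 ≤ x)
    (hy : 0 < y) : x ^ p ≤ y ^ p + p * y ^ (p - 1) * (x - y) := by
  have hbern := rpow_one_add_le_one_add_mul_self (s := x / y - 1) (by
    have := div_nonneg hx hy.le; linarith) hp₀ hp₁
  rw [add_sub_cancel, div_rpow hx hy.le, div_le_iff₀ (rpow_pos_of_pos hy p)] at hbern
  calc x ^ p ≤ (1 + p * (x / y - 1)) * y ^ p := hbern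
    _ = y ^ p + p * (y ^ p / y) * (x - y) := by field_simp
    _ = y ^ p + p * y ^ (p - 1) * (x - y) := by rw [rpow_sub_one hy.ne']

lemma mul_rpow_sub_one_mul_le {α a b : ℝ} (hα : 1 < α) (ha : 0 ≤ a) (hb : 0 ≤ b) :
    α * (a ^ (α - 1) * b) ≤ (α - 1) * a ^ α + b ^ α := by
  have hpow : (a ^ (α - 1)) ^ (α / (α - 1)) = a ^ α := by
    rw [← rpow_mul ha, mul_div_cancel₀ _ (by linarith)]
  have hyoung := young_inequality_of_nonneg (rpow_nonneg ha (α - 1)) hb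
    (HolderConjugate.conjExponent hα).symm
  rw [conjExponent, hpow] at hyoung
  calc α * (a ^ (α - 1) * b) ≤ α * (a ^ α / (α / (α - 1)) + b ^ α / α) := by gcongr
    _ = (α - 1) * a ^ α + b ^ α := by field_simp

lemma rpow_le_rpow_add_mul_sq_sub {α c y : ℝ} (hα₀ : 0 ≤ α) (hα₂ : α ≤ 2) (hc : 0 ≤ c)
    (hy : 0 < y) : c ^ α ≤ y ^ α + α / 2 * y ^ (α - 2) * (c ^ 2 - y ^ 2) := by
  have hsq : ∀ {z q : ℝ}, 0 ≤ z → (z ^ 2) ^ q = z ^ (2 * q) := fun hz => by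
    rw [← rpow_natCast, ← rpow_mul hz, Nat.cast_ofNat]
  have htangent := rpow_le_rpow_add_mul_sub (p := α / 2) (by linarith) (by linarith)
    (sq_nonneg c) (pow_pos hy 2)
  rwa [hsq hc, hsq hy.le, hsq hy.le, mul_div_cancel₀ _ two_ne_zero,
    show 2 * (α / 2 - 1) = α - 2 by ring] at htangent

lemma div_two_mul_rpow_sub_two_mul_sq_le {α a b : ℝ} (hα₁ : 1 ≤ α) (hα₂ : α ≤ 2) (ha : 0 < a)
    (hb : 0 ≤ b) (hba : b ≤ 2 * a) : α / 2 * a ^ (α - 2) * b ^ 2 ≤ 2 * b ^ α := by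
  rcases hb.eq_or_lt with rfl | hb
  · simp [zero_rpow (by linarith : α ≠ 0)]
  have hpow : a ^ (α - 2) ≤ 2 * b ^ (α - 2) :=
    calc a ^ (α - 2) ≤ (b / 2) ^ (α - 2) := rpow_le_rpow_of_nonpos (by positivity) (by linarith)
          (by linarith)
      _ = 2 ^ (2 - α) * b ^ (α - 2) := by
          rw [div_rpow hb.le zero_le_two, div_eq_mul_inv, mul_comm, ← rpow_neg zero_le_two,
            neg_sub]
      _ ≤ 2 ^ (1 : ℝ) * b ^ (α - 2) := by
          gcongr
          · exact one_le_two
          · linarith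
      _ = 2 * b ^ (α - 2) := by rw [rpow_one]
  calc α / 2 * a ^ (α - 2) * b ^ 2 ≤ 1 * (2 * b ^ (α - 2)) * b ^ 2 := by
        gcongr
        linarith
    _ = 2 * b ^ α := by
        rw [one_mul, mul_assoc, ← rpow_natCast, ← rpow_add hb, Nat.cast_ofNat, sub_add_cancel]

section SqEq

variable {α a b c t : ℝ}

lemma rpow_le_of_sq_eq_of_le_two_mul (hα₁ : 1 ≤ α) (hα₂ : α ≤ 2) (ha : 0 < a) (hb : 0 ≤ b)
    (hc : 0 ≤ c) (hsq : c ^ 2 = a ^ 2 + 2 * t + b ^ 2) (hba : b ≤ 2 * a) :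
    c ^ α ≤ a ^ α + α * a ^ (α - 2) * t + 2 * b ^ α :=
  calc c ^ α ≤ a ^ α + α / 2 * a ^ (α - 2) * (c ^ 2 - a ^ 2) :=
        rpow_le_rpow_add_mul_sq_sub (by linarith) hα₂ hc ha
    _ = a ^ α + α * a ^ (α - 2) * t + α / 2 * a ^ (α - 2) * b ^ 2 := by rw [hsq]; ring
    _ ≤ a ^ α + α * a ^ (α - 2) * t + 2 * b ^ α := by
        grw [div_two_mul_rpow_sub_two_mul_sq_le hα₁ hα₂ ha hb hba]

lemma rpow_le_of_sq_eq_of_two_mul_lt (hα₁ : 1 < α) (hα₂ : α ≤ 2) (ha : 0 < a) (hc : 0 ≤ c)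
    (hsq : c ^ 2 = a ^ 2 + 2 * t + b ^ 2) (ht : -(a * b) ≤ t) (hab : 2 * a < b) :
    c ^ α ≤ a ^ α + α * a ^ (α - 2) * t + 2 * b ^ α := by
  have hba : 0 < b - a := by linarith
  have hpow : (b - a) ^ (α - 2) ≤ a ^ (α - 2) :=
    rpow_le_rpow_of_nonpos ha (by linarith) (by linarith)
  have hgap : c ^ 2 - (b - a) ^ 2 = 2 * (t + a * b) := by rw [hsq]; ring
  have hmul : a ^ (α - 2) * (a * b) = a ^ (α - 1) * b := by
    rw [← mul_assoc, ← rpow_add_one ha.ne']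
    ring_nf
  calc c ^ α ≤ (b - a) ^ α + α / 2 * (b - a) ^ (α - 2) * (c ^ 2 - (b - a) ^ 2) :=
        rpow_le_rpow_add_mul_sq_sub (by linarith) hα₂ hc hba
    _ ≤ (b - a) ^ α + α / 2 * a ^ (α - 2) * (c ^ 2 - (b - a) ^ 2) := by
        gcongr
        rw [hgap]; linarith
    _ = (b - a) ^ α + α * a ^ (α - 2) * t + α * (a ^ (α - 1) * b) := by
        rw [hgap, ← hmul]; ring
    _ ≤ b ^ α + α * a ^ (α - 2) * t + ((α - 1) * a ^ α + b ^ α) := by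
        gcongr
        · linarith
        · exact mul_rpow_sub_one_mul_le hα₁ ha.le (by linarith)
    _ ≤ a ^ α + α * a ^ (α - 2) * t + 2 * b ^ α := by
        nlinarith [rpow_nonneg ha.le α]

lemma rpow_le_of_sq_eq (hα₁ : 1 < α) (hα₂ : α ≤ 2) (ha : 0 < a) (hb : 0 ≤ b) (hc : 0 ≤ c)
    (hsq : c ^ 2 = a ^ 2 + 2 * t + b ^ 2) (ht : -(a * b) ≤ t) :
    c ^ α ≤ a ^ α + α * a ^ (α - 2) * t + 2 * b ^ α := by
  rcases le_or_gt b (2 * a) with hba | hab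
  · exact rpow_le_of_sq_eq_of_le_two_mul hα₁.le hα₂ ha hb hc hsq hba
  · exact rpow_le_of_sq_eq_of_two_mul_lt hα₁ hα₂ ha hc hsq ht hab

end SqEq

end Real

theorem norm_add_rpow_le {E : Type*} [NormedAddCommGroup E] [InnerProductSpace ℝ E] {α : ℝ}
    (hα₁ : 1 < α) (hα₂ : α ≤ 2) (u v : E) :
    ‖u + v‖ ^ α ≤ ‖u‖ ^ α + α * ‖u‖ ^ (α - 2) * inner ℝ u v + 2 * ‖v‖ ^ α := by
  rcases eq_or_ne u 0 with rfl | hu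
  · simp only [zero_add, norm_zero, Real.zero_rpow (by linarith : α ≠ 0), inner_zero_left]
    linarith [Real.rpow_nonneg (norm_nonneg v) α]
  exact Real.rpow_le_of_sq_eq hα₁ hα₂ (norm_pos_iff.2 hu) (norm_nonneg v) (norm_nonneg _)
    (norm_add_sq_real u v) (neg_le_of_abs_le (abs_real_inner_le_norm u v))

namespace Matrix

variable {ι κ : Type*}

def toEuclideanSpace (A : Matrix ι κ ℝ) : EuclideanSpace ℝ (ι × κ) :=
  WithLp.toLp 2 fun p => A p.1 p.2

lemma toEuclideanSpace_add (A B : Matrix ι κ ℝ) :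
    (A + B).toEuclideanSpace = A.toEuclideanSpace + B.toEuclideanSpace := rfl

end Matrix

section Frobenius

variable {ι κ : Type*} [Fintype ι] [Fintype κ]

lemma frobNorm_eq_norm_toEuclideanSpace (A : Matrix ι κ ℝ) :
    frobNorm A = ‖A.toEuclideanSpace‖ := by
  simp [frobNorm, EuclideanSpace.norm_eq, toEuclideanSpace, Fintype.sum_prod_type]

lemma tin_eq_inner_toEuclideanSpace (A B : Matrix ι κ ℝ) :
    tin A B = inner ℝ A.toEuclideanSpace B.toEuclideanSpace := by
  simp only [tin, trace, diag, mul_apply, transpose_apply, toEuclideanSpace, PiLp.inner_apply,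
    RCLike.inner_apply, conj_trivial, Fintype.sum_prod_type]
  rw [Finset.sum_comm]
  simp_rw [mul_comm]

end Frobenius

theorem stmt1_general {m n : ℕ} (α : ℝ) (hα1 : 1 < α) (hα2 : α ≤ 2)
    (U V : Matrix (Fin m) (Fin n) ℝ) :
    frobNorm (U + V) ^ α
      ≤ frobNorm U ^ α + α * frobNorm U ^ (α - 2) * tin U V + 2 * frobNorm V ^ α := by
  simpa only [frobNorm_eq_norm_toEuclideanSpace, tin_eq_inner_toEuclideanSpace,
    Matrix.toEuclideanSpace_add] using
    norm_add_rpow_le hα1 hα2 U.toEuclideanSpace V.toEuclideanSpace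

theorem stmt1 {m n : ℕ} (α : ℝ) (hα1 : 1 < α) (hα2 : α ≤ 2)
    (U V : Matrix (Fin m) (Fin n) ℝ) (hU : U ≠ 0) :
    frobNorm (U + V) ^ α
      ≤ frobNorm U ^ α + α * frobNorm U ^ (α - 2) * tin U V + 2 * frobNorm V ^ α :=
  stmt1_general α hα1 hα2 U V
end

section
/- Let f₁,…,f_N : ℝ^{m×n} → ℝ be differentiable and suppose there exists L_* > 0 such that ‖∇f_i(X) − ∇f_i(Y)‖_* ≤ L_*‖X − Y‖ for all X, Y ∈ ℝ^{m×n} and all i (spectral norm on the right). Set f := (1/N)∑_{i=1}^N f_i. Then for any X₁,…,X_N ∈ ℝ^{m×n} with average X̄ := (1/N)∑_{i=1}^N X_i and vertical stacking X_{[N]}, it holds that ‖∇f(X̄) − (1/N)∑_{i=1}^N ∇f_i(X_i)‖_* ≤ L_* ‖X_{[N]} − 1_N ⊗ X̄‖, where the right-hand norm is the spectral norm of the (Nm)×n matrix. -/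
open Matrix Kronecker

/-!
The gradient of the average is the average of the gradients, so the left-hand side is the nuclear
norm of `(1/N) ∑ᵢ (∇fᵢ(X̄) - ∇fᵢ(Xᵢ))`. The nuclear norm is dual to the spectral norm under the trace
inner product, hence convex, and each term is bounded by `L ‖X̄ - Xᵢ‖`, while `X̄ - Xᵢ` is, up to
sign, a block of rows of `X_{[N]} - 1_N ⊗ X̄`, whose spectral norm is therefore larger.
-/

open scoped Matrix.Norms.L2Operator InnerProductSpace
open Unitary

lemma specNorm_eq_l2_opNorm {ι κ : Type*} [Fintype ι] [Fintype κ] [DecidableEq κ]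
    (A : Matrix ι κ ℝ) : specNorm A = ‖A‖ :=
  rfl

section TraceInner

variable {ι κ γ : Type*} [Fintype ι] [Fintype κ]

lemma tin_smul_left (c : ℝ) (A B : Matrix ι κ ℝ) : tin (c • A) B = c * tin A B := by
  rw [tin, tin, transpose_smul, Matrix.smul_mul, trace_smul, smul_eq_mul]

lemma tin_smul_right (c : ℝ) (A B : Matrix ι κ ℝ) : tin A (c • B) = c * tin A B := by
  rw [tin, tin, Matrix.mul_smul, trace_smul, smul_eq_mul]

lemma tin_sum_left (s : Finset γ) (A : γ → Matrix ι κ ℝ) (B : Matrix ι κ ℝ) :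
    tin (∑ i ∈ s, A i) B = ∑ i ∈ s, tin (A i) B := by
  rw [tin, transpose_sum, Matrix.sum_mul, trace_sum]
  rfl

lemma tin_sum_right (s : Finset γ) (A : Matrix ι κ ℝ) (B : γ → Matrix ι κ ℝ) :
    tin A (∑ i ∈ s, B i) = ∑ i ∈ s, tin A (B i) := by
  rw [tin, Matrix.mul_sum, trace_sum]
  rfl

lemma tin_single_one [DecidableEq ι] [DecidableEq κ] (G : Matrix ι κ ℝ) (i : ι) (j : κ) :
    tin G (single i j 1) = G i j := by
  simp [tin, trace_mul_single]

end TraceInner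

section Gradient

variable {ι κ γ : Type*} [Fintype ι] [Fintype κ]

def HasGateauxGradientAt (F : Matrix ι κ ℝ → ℝ) (G X : Matrix ι κ ℝ) : Prop :=
  ∀ V, HasDerivAt (fun t : ℝ => F (X + t • V)) (tin G V) 0

theorem HasGateauxGradientAt.unique {F : Matrix ι κ ℝ → ℝ} {G₁ G₂ X : Matrix ι κ ℝ}
    (h₁ : HasGateauxGradientAt F G₁ X) (h₂ : HasGateauxGradientAt F G₂ X) : G₁ = G₂ := by
  classical
  ext i j
  rw [← tin_single_one G₁, ← tin_single_one G₂]
  exact (h₁ _).unique (h₂ _)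

theorem HasGateauxGradientAt.const_mul_sum {s : Finset γ} {F : γ → Matrix ι κ ℝ → ℝ}
    {G : γ → Matrix ι κ ℝ} {X : Matrix ι κ ℝ} (c : ℝ)
    (h : ∀ i ∈ s, HasGateauxGradientAt (F i) (G i) X) :
    HasGateauxGradientAt (fun Y => c * ∑ i ∈ s, F i Y) (c • ∑ i ∈ s, G i) X := fun V => by
  rw [tin_smul_left, tin_sum_left]
  exact (HasDerivAt.fun_sum fun i hi => h i hi V).const_mul c

end Gradient

section Unitary

variable {𝕜 κ : Type*} [RCLike 𝕜] [Fintype κ] [DecidableEq κ]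

lemma trace_conjStarAlgAut (U : unitary (Matrix κ κ 𝕜)) (X : Matrix κ κ 𝕜) :
    (conjStarAlgAut 𝕜 _ U X).trace = X.trace := by
  rw [conjStarAlgAut_apply, trace_mul_cycle, coe_star_mul_self, one_mul]

lemma l2_opNorm_conjStarAlgAut (U : unitary (Matrix κ κ 𝕜)) (X : Matrix κ κ 𝕜) :
    ‖conjStarAlgAut 𝕜 _ U X‖ = ‖X‖ := by
  rw [conjStarAlgAut_apply, ← coe_star, CStarRing.norm_mul_coe_unitary,
    CStarRing.norm_coe_unitary_mul]

end Unitary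

section SpectralNorm

variable {𝕜 ι ι' κ : Type*} [RCLike 𝕜] [Fintype ι] [Fintype ι'] [Fintype κ] [DecidableEq κ]

lemma norm_toEuclideanLin_apply_le (A : Matrix ι κ 𝕜) (x : EuclideanSpace 𝕜 κ) :
    ‖toEuclideanLin A x‖ ≤ ‖A‖ * ‖x‖ :=
  (toEuclideanLin A).toContinuousLinearMap.le_opNorm x

lemma l2_opNorm_submatrix_le (A : Matrix ι κ 𝕜) (e : ι' ↪ ι) : ‖A.submatrix e id‖ ≤ ‖A‖ := by
  refine ContinuousLinearMap.opNorm_le_bound _ (norm_nonneg _) fun x => ?_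
  refine le_trans ?_ (norm_toEuclideanLin_apply_le A x)
  have hrows : ∀ r, toEuclideanLin (A.submatrix e id) x r = toEuclideanLin A x (e r) :=
    fun _ => rfl
  simp only [EuclideanSpace.norm_eq]
  gcongr
  simp only [LinearEquiv.trans_apply, LinearMap.coe_toContinuousLinearMap', hrows]
  rw [← Finset.sum_map _ e fun i => ‖toEuclideanLin A x i‖ ^ 2]
  exact Finset.sum_le_sum_of_subset_of_nonneg (Finset.subset_univ _) fun _ _ _ => by positivity

lemma specNorm_sub_le_vstack {N m n : ℕ} (Y : Fin N → Matrix (Fin m) (Fin n) ℝ)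
    (Z : Matrix (Fin m) (Fin n) ℝ) (i : Fin N) :
    specNorm (Z - Y i) ≤ specNorm (vstack Y - vstack fun _ => Z) := by
  have hblock : Z - Y i =
      -(vstack Y - vstack fun _ => Z).submatrix (Function.Embedding.sectR i (Fin m)) id := by
    ext r j
    simp [vstack]
  rw [specNorm_eq_l2_opNorm, specNorm_eq_l2_opNorm, hblock, norm_neg]
  exact l2_opNorm_submatrix_le _ _

end SpectralNorm

section NuclearNorm

variable {ι κ ν γ : Type*} [Fintype ι] [Fintype κ] [Fintype ν] [DecidableEq κ]

lemma inner_toEuclideanLin_conjTranspose_mul (B A : Matrix ι κ ℝ) (x y : EuclideanSpace ℝ κ) :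
    ⟪x, toEuclideanLin (Bᴴ * A) y⟫_ℝ = ⟪toEuclideanLin B x, toEuclideanLin A y⟫_ℝ := by
  classical
  rw [toLpLin_mul_same, LinearMap.comp_apply, toEuclideanLin_conjTranspose_eq_adjoint,
    LinearMap.adjoint_inner_right]

lemma tin_eq_sum_inner (B A : Matrix ι κ ℝ) (b : OrthonormalBasis ν ℝ (EuclideanSpace ℝ κ)) :
    tin B A = ∑ k, ⟪toEuclideanLin B (b k), toEuclideanLin A (b k)⟫_ℝ := by
  rw [tin, ← conjTranspose_eq_transpose_of_trivial,
    ← trace_toLin_eq _ (EuclideanSpace.basisFun κ ℝ).toBasis,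
    ← toEuclideanLin_eq_toLin_orthonormal, LinearMap.trace_eq_sum_inner _ b]
  simp only [inner_toEuclideanLin_conjTranspose_mul]

lemma norm_toEuclideanLin_eigenvectorBasis (A : Matrix ι κ ℝ) (k : κ) :
    ‖toEuclideanLin A ((isHermitian_conjTranspose_mul_self A).eigenvectorBasis k)‖
      = √((isHermitian_conjTranspose_mul_self A).eigenvalues k) := by
  set hA := isHermitian_conjTranspose_mul_self A
  have hu : toEuclideanLin (Aᴴ * A) (hA.eigenvectorBasis k)
      = hA.eigenvalues k • hA.eigenvectorBasis k := by
    rw [toLpLin_apply, hA.mulVec_eigenvectorBasis]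
    rfl
  rw [← Real.sqrt_sq (norm_nonneg _), ← real_inner_self_eq_norm_sq,
    ← inner_toEuclideanLin_conjTranspose_mul, hu, real_inner_smul_right,
    real_inner_self_eq_norm_sq, hA.eigenvectorBasis.norm_eq_one, one_pow, mul_one]

lemma nucNorm_eq_sum_sqrt_eigenvalues (A : Matrix ι κ ℝ) :
    nucNorm A = ∑ k, √((isHermitian_conjTranspose_mul_self A).eigenvalues k) := by
  rw [nucNorm, ← conjStarAlgAut_apply (S := ℝ), trace_conjStarAlgAut, trace_diagonal]
  rfl

lemma nucNorm_nonneg (A : Matrix ι κ ℝ) : 0 ≤ nucNorm A := by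
  rw [nucNorm_eq_sum_sqrt_eigenvalues]
  positivity

lemma tin_le_l2_opNorm_mul_nucNorm (B A : Matrix ι κ ℝ) : tin B A ≤ ‖B‖ * nucNorm A := by
  set u := (isHermitian_conjTranspose_mul_self A).eigenvectorBasis
  rw [tin_eq_sum_inner B A u, nucNorm_eq_sum_sqrt_eigenvalues, Finset.mul_sum]
  refine Finset.sum_le_sum fun k _ => ?_
  calc _ ≤ ‖toEuclideanLin B (u k)‖ * ‖toEuclideanLin A (u k)‖ := real_inner_le_norm _ _
    _ ≤ ‖B‖ * √((isHermitian_conjTranspose_mul_self A).eigenvalues k) := by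
      rw [norm_toEuclideanLin_eigenvectorBasis]
      gcongr
      simpa [u.norm_eq_one] using norm_toEuclideanLin_apply_le B (u k)

/-- With `Aᴴ A = U diag(d) Uᴴ`, the dual witness is `A U diag(d)^{-1/2} Uᴴ`; the junk value
`0⁻¹ = 0` takes care of the kernel of `A`. -/
lemma exists_l2_opNorm_le_one_tin_eq_sum_sqrt {A : Matrix ι κ ℝ} {U : unitary (Matrix κ κ ℝ)}
    {d : κ → ℝ} (hAA : Aᴴ * A = conjStarAlgAut ℝ _ U (diagonal d)) :
    ∃ B : Matrix ι κ ℝ, ‖B‖ ≤ 1 ∧ tin B A = ∑ k, √(d k) := by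
  set φ := conjStarAlgAut ℝ _ U
  set W := φ (diagonal fun k => (√(d k))⁻¹)
  have hW : Wᴴ = W := by
    rw [← star_eq_conjTranspose, ← map_star, star_eq_conjTranspose, diagonal_conjTranspose,
      star_trivial]
  refine ⟨A * W, ?_, ?_⟩
  · have hB : (A * W)ᴴ * (A * W) = φ (diagonal fun k => (√(d k))⁻¹ * √(d k)) := by
      rw [conjTranspose_mul, hW, Matrix.mul_assoc, ← Matrix.mul_assoc Aᴴ, hAA, ← map_mul,
        ← map_mul, diagonal_mul_diagonal, diagonal_mul_diagonal]
      simp only [← div_eq_mul_inv, Real.div_sqrt]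
    have hB_sq : ‖A * W‖ * ‖A * W‖ ≤ 1 := by
      rw [← l2_opNorm_conjTranspose_mul_self, hB, l2_opNorm_conjStarAlgAut, l2_opNorm_diagonal]
      refine pi_norm_le_iff_of_nonneg zero_le_one |>.2 fun k => ?_
      rw [Real.norm_of_nonneg (by positivity)]
      exact inv_mul_le_one
    nlinarith [norm_nonneg (A * W)]
  · rw [tin, ← trace_transpose, transpose_mul, transpose_transpose, ← Matrix.mul_assoc,
      ← conjTranspose_eq_transpose_of_trivial, hAA, ← map_mul, diagonal_mul_diagonal,
      trace_conjStarAlgAut, trace_diagonal]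
    simp only [← div_eq_mul_inv, Real.div_sqrt]

lemma exists_l2_opNorm_le_one_tin_eq_nucNorm (A : Matrix ι κ ℝ) :
    ∃ B : Matrix ι κ ℝ, ‖B‖ ≤ 1 ∧ tin B A = nucNorm A :=
  nucNorm_eq_sum_sqrt_eigenvalues A ▸
    exists_l2_opNorm_le_one_tin_eq_sum_sqrt (isHermitian_conjTranspose_mul_self A).spectral_theorem

lemma nucNorm_smul_sum_le {c : ℝ} (hc : 0 ≤ c) (s : Finset γ) (A : γ → Matrix ι κ ℝ) :
    nucNorm (c • ∑ i ∈ s, A i) ≤ c * ∑ i ∈ s, nucNorm (A i) := by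
  obtain ⟨B, hB, hBA⟩ := exists_l2_opNorm_le_one_tin_eq_nucNorm (c • ∑ i ∈ s, A i)
  rw [← hBA, tin_smul_right, tin_sum_right]
  gcongr with i
  exact (tin_le_l2_opNorm_mul_nucNorm B (A i)).trans
    (mul_le_of_le_one_left (nucNorm_nonneg _) hB)

end NuclearNorm

theorem stmt11_general {N m n : ℕ}
    (f : Fin N → Matrix (Fin m) (Fin n) ℝ → ℝ)
    (g : Fin N → Matrix (Fin m) (Fin n) ℝ → Matrix (Fin m) (Fin n) ℝ)
    (hdiff : ∀ i X V, HasDerivAt (fun t : ℝ => f i (X + t • V)) (tin (g i X) V) 0)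
    (L : ℝ) (hL : 0 < L)
    (hLip : ∀ i X Y, nucNorm (g i X - g i Y) ≤ L * specNorm (X - Y))
    (gf : Matrix (Fin m) (Fin n) ℝ → Matrix (Fin m) (Fin n) ℝ)
    (hgf : ∀ X V, HasDerivAt (fun t : ℝ => (N : ℝ)⁻¹ * ∑ i, f i (X + t • V)) (tin (gf X) V) 0) :
    ∀ X : Fin N → Matrix (Fin m) (Fin n) ℝ,
      nucNorm (gf ((N : ℝ)⁻¹ • ∑ i, X i) - (N : ℝ)⁻¹ • ∑ i, g i (X i))
        ≤ L * specNorm (vstack X - vstack (fun _ => (N : ℝ)⁻¹ • ∑ i, X i)) := by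
  intro X
  set Xbar := (N : ℝ)⁻¹ • ∑ i, X i
  set S := specNorm (vstack X - vstack fun _ => Xbar)
  have hgrad : gf Xbar = (N : ℝ)⁻¹ • ∑ i, g i Xbar :=
    HasGateauxGradientAt.unique (F := fun Y => (N : ℝ)⁻¹ * ∑ i, f i Y) (hgf Xbar)
      (.const_mul_sum _ fun i _ => hdiff i Xbar)
  have hterm : ∀ i, nucNorm (g i Xbar - g i (X i)) ≤ L * S := fun i =>
    (hLip i Xbar (X i)).trans (mul_le_mul_of_nonneg_left (specNorm_sub_le_vstack X Xbar i) hL.le)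
  calc nucNorm (gf Xbar - (N : ℝ)⁻¹ • ∑ i, g i (X i))
      = nucNorm ((N : ℝ)⁻¹ • ∑ i, (g i Xbar - g i (X i))) := by
        rw [hgrad, Finset.sum_sub_distrib, smul_sub]
    _ ≤ (N : ℝ)⁻¹ * ∑ i, nucNorm (g i Xbar - g i (X i)) :=
        nucNorm_smul_sum_le (by positivity) _ _
    _ ≤ (N : ℝ)⁻¹ * ∑ _i : Fin N, L * S := by gcongr with i; exact hterm i
    _ = ((N : ℝ)⁻¹ * N) * (L * S) := by simp [mul_assoc]
    _ ≤ L * S := mul_le_of_le_one_left (mul_nonneg hL.le (norm_nonneg _)) inv_mul_le_one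

theorem stmt11 {N m n : ℕ} (hN : 0 < N)
    (f : Fin N → Matrix (Fin m) (Fin n) ℝ → ℝ)
    (g : Fin N → Matrix (Fin m) (Fin n) ℝ → Matrix (Fin m) (Fin n) ℝ)
    (hdiff : ∀ i X V, HasDerivAt (fun t : ℝ => f i (X + t • V)) (tin (g i X) V) 0)
    (L : ℝ) (hL : 0 < L)
    (hLip : ∀ i X Y, nucNorm (g i X - g i Y) ≤ L * specNorm (X - Y))
    (gf : Matrix (Fin m) (Fin n) ℝ → Matrix (Fin m) (Fin n) ℝ)
    (hgf : ∀ X V, HasDerivAt (fun t : ℝ => (N : ℝ)⁻¹ * ∑ i, f i (X + t • V)) (tin (gf X) V) 0) :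
    ∀ X : Fin N → Matrix (Fin m) (Fin n) ℝ,
      nucNorm (gf ((N : ℝ)⁻¹ • ∑ i, X i) - (N : ℝ)⁻¹ • ∑ i, g i (X i))
        ≤ L * specNorm (vstack X - vstack (fun _ => (N : ℝ)⁻¹ • ∑ i, X i)) :=
  stmt11_general f g hdiff L hL hLip gf hgf
end
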